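/- For every θ ∈ (0,1/2] there is a constant C > 0 such that for all ε ∈ (0,1], all t ≥ 0 and all r ≥ 1 with 2εr ≤ ε^θ, one has |ε^{−2}·D_ε(r,t) + ∂_t D_ε(r,t) − e^{−t r²}| ≤ C·ε^{2θ}·e^{−t r²/2}, where ∂_t D_ε(r,t) is the derivative of the map t ↦ D_ε(r,t). -/

import Mathlib

/-- The entire function `φ(x) = ∑_{j=0}^∞ x^j/(2j+1)!`. -/
noncomputable def phi (x : ℝ) : ℝ := ∑' j : ℕ, x ^ j / (Nat.factorial (2 * j + 1) : ℝ)

/-- The damped-wave Fourier symbol `D_ε(r,t) = e^{−t/(2ε²)}·t·φ(t²(1/(4ε⁴) − r²/ε²))`. -/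
noncomputable def D (ε r t : ℝ) : ℝ :=
  Real.exp (-t / (2 * ε ^ 2)) * t * phi (t ^ 2 * (1 / (4 * ε ^ 4) - r ^ 2 / ε ^ 2))

/-!
Let `a < b` be the roots of `ε²x² − x + r² = 0`. Then `D_ε(r,t) = (e^{−at} − e^{−bt})/(b − a)`,
and since `a + b = ε⁻²`,
`ε⁻²D + ∂ₜD = (b e^{−at} − a e^{−bt})/(b − a) = e^{−at} + a/(b − a)·(e^{−at} − e^{−bt})`:
the fast mode `e^{−bt}` only enters with the weight `a/(b − a) ≈ ε²r²`.
As `r² = ab/(a + b)`, the slow rate satisfies `a − r² = (a/b)·r²`, so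
`e^{−tr²} − e^{−at} ≤ (a/b)·tr²e^{−tr²} ≤ 2(a/b)e^{−tr²/2}`.
Both errors are thus `O(ε²r²) e^{−tr²/2}`, and `4ε²r² ≤ ε^{2θ}`.
-/

open Real

lemma mul_phi_sq (y : ℝ) : y * phi (y ^ 2) = sinh y := by
  rw [sinh_eq_tsum, phi, ← tsum_mul_left]
  exact tsum_congr fun j => by rw [pow_add, pow_mul]; ring

lemma hasDerivAt_exp_sub_exp_div (a b t : ℝ) :
    HasDerivAt (fun t => (exp (-t * a) - exp (-t * b)) / (b - a))
      ((b * exp (-t * b) - a * exp (-t * a)) / (b - a)) t := by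
  have h (c : ℝ) : HasDerivAt (fun t => exp (-t * c)) (-c * exp (-t * c)) t := by
    simpa [mul_comm] using ((hasDerivAt_neg t).mul_const c).exp
  exact (((h a).sub (h b)).div_const (b - a)).congr_deriv (by ring)

section DecayRates

variable {ε r a b : ℝ}

lemma D_eq_exp_sub_exp (hab : a ≠ b) (hsum : a + b = 1 / ε ^ 2)
    (hprod : a * b = r ^ 2 / ε ^ 2) (t : ℝ) :
    D ε r t = (exp (-t * a) - exp (-t * b)) / (b - a) := by
  set l := (b - a) / 2 with hl_def
  have hl : l ≠ 0 := div_ne_zero (sub_ne_zero.2 hab.symm) two_ne_zero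
  have harg : t ^ 2 * (1 / (4 * ε ^ 4) - r ^ 2 / ε ^ 2) = (l * t) ^ 2 := by
    have : 1 / (4 * ε ^ 4) - r ^ 2 / ε ^ 2 = ((a + b) ^ 2 - 4 * (a * b)) / 4 := by
      rw [hsum, hprod]; ring
    rw [this]; ring
  have hmid : -t / (2 * ε ^ 2) = -t * ((a + b) / 2) := by rw [hsum]; ring
  have hsinh : t * phi ((l * t) ^ 2) = sinh (l * t) / l := by
    rw [← mul_phi_sq]; field_simp
  have ha : exp (-t * a) = exp (-t * ((a + b) / 2)) * exp (l * t) := by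
    rw [← exp_add, hl_def]; ring_nf
  have hb : exp (-t * b) = exp (-t * ((a + b) / 2)) * exp (-(l * t)) := by
    rw [← exp_add, hl_def]; ring_nf
  rw [D, harg, hmid, mul_assoc, hsinh, sinh_eq, ha, hb, hl_def]
  field_simp

lemma D_div_sq_add_deriv (hab : a ≠ b) (hsum : a + b = 1 / ε ^ 2)
    (hprod : a * b = r ^ 2 / ε ^ 2) (t : ℝ) :
    D ε r t / ε ^ 2 + deriv (D ε r) t = (b * exp (-t * a) - a * exp (-t * b)) / (b - a) := by
  have hD : D ε r = fun t => (exp (-t * a) - exp (-t * b)) / (b - a) :=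
    funext (D_eq_exp_sub_exp hab hsum hprod)
  rw [hD, (hasDerivAt_exp_sub_exp_div a b t).deriv, div_eq_mul_one_div _ (ε ^ 2), ← hsum]
  field_simp [sub_ne_zero.2 hab.symm]
  ring

end DecayRates

lemma exists_decay_rates {ε r κ : ℝ} (hε : ε ≠ 0) (hs : 4 * ε ^ 2 * r ^ 2 ≤ κ) (hκ : κ < 1) :
    ∃ a b, 0 ≤ a ∧ a < b ∧ a + b = 1 / ε ^ 2 ∧ a * b = r ^ 2 / ε ^ 2 ∧
      a / (b - a) ≤ 4 * ε ^ 2 * r ^ 2 / (2 * (1 - κ)) := by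
  set s := 4 * ε ^ 2 * r ^ 2
  set σ := √(1 - s)
  have hs0 : 0 ≤ s := by positivity
  have hσsq : σ ^ 2 = 1 - s := sq_sqrt (by linarith)
  have hσ0 : 0 ≤ σ := sqrt_nonneg _
  have hσ1 : σ ≤ 1 := sqrt_le_one.2 (by linarith)
  have hσs : 1 - s ≤ σ := by nlinarith
  refine ⟨(1 - σ) / (2 * ε ^ 2), (1 + σ) / (2 * ε ^ 2), by positivity, ?_, ?_, ?_, ?_⟩
  · gcongr; linarith
  · field_simp; ring
  · field_simp; linear_combination (-1) * hσsq
  · have hσpos : 0 < σ := by linarith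
    have hκ' : 0 < 1 - κ := by linarith
    calc (1 - σ) / (2 * ε ^ 2) / ((1 + σ) / (2 * ε ^ 2) - (1 - σ) / (2 * ε ^ 2))
        = (1 - σ) / (2 * σ) := by field_simp [hσpos.ne']; ring
      _ ≤ s / (2 * (1 - κ)) := by gcongr <;> nlinarith

lemma exp_neg_sub_exp_neg_le (q a t : ℝ) :
    exp (-t * q) - exp (-t * a) ≤ (a - q) * t * exp (-t * q) := by
  have hsplit : exp (-t * a) = exp (-t * q) * exp (-((a - q) * t)) := by
    rw [← exp_add]; ring_nf
  rw [hsplit]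
  nlinarith [add_one_le_exp (-((a - q) * t)), exp_pos (-t * q)]

lemma mul_exp_neg_le (x : ℝ) : x * exp (-x) ≤ 2 * exp (-x / 2) := by
  have hx : x ≤ 2 * exp (x / 2) := by linarith [add_one_le_exp (x / 2), exp_pos (x / 2)]
  calc x * exp (-x) ≤ 2 * exp (x / 2) * exp (-x) := by gcongr
    _ = 2 * exp (-x / 2) := by rw [mul_assoc, ← exp_add]; ring_nf

lemma abs_exp_combination_sub_exp_le {a b q t : ℝ} (ha : 0 ≤ a) (hab : a < b)
    (hq : a * b = q * (a + b)) (ht : 0 ≤ t) :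
    |(b * exp (-t * a) - a * exp (-t * b)) / (b - a) - exp (-t * q)|
      ≤ 3 * (a / (b - a)) * exp (-t * q / 2) := by
  have hba : 0 < b - a := sub_pos.2 hab
  have hb : 0 < b := ha.trans_lt hab
  have hq0 : 0 ≤ q := by nlinarith
  have hqa : q ≤ a := by nlinarith
  have hgap : (a - q) * b = a * q := by linarith
  have hρ : 0 ≤ a / (b - a) := div_nonneg ha hba.le
  have hEa : exp (-t * a) ≤ exp (-t * q) := exp_le_exp.2 (by nlinarith)
  have hEb : exp (-t * b) ≤ exp (-t * a) := exp_le_exp.2 (by nlinarith)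
  have hEq : exp (-t * q) ≤ exp (-t * q / 2) := exp_le_exp.2 (by nlinarith)
  have hsplit : (b * exp (-t * a) - a * exp (-t * b)) / (b - a) - exp (-t * q)
      = (exp (-t * a) - exp (-t * q)) + a / (b - a) * (exp (-t * a) - exp (-t * b)) := by
    field_simp
    ring
  have hslow : |exp (-t * a) - exp (-t * q)| ≤ 2 * (a / (b - a)) * exp (-t * q / 2) := by
    rw [abs_sub_comm, abs_of_nonneg (sub_nonneg.2 hEa)]
    calc exp (-t * q) - exp (-t * a) ≤ (a - q) * t * exp (-t * q) := exp_neg_sub_exp_neg_le q a t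
      _ = a / b * ((t * q) * exp (-(t * q))) := by
        rw [neg_mul]; field_simp; linear_combination t * hgap
      _ ≤ a / b * (2 * exp (-t * q / 2)) := by
        rw [neg_mul]; exact mul_le_mul_of_nonneg_left (mul_exp_neg_le _) (div_nonneg ha hb.le)
      _ = 2 * (a / b) * exp (-t * q / 2) := by ring
      _ ≤ 2 * (a / (b - a)) * exp (-t * q / 2) := by
        gcongr 2 * ?_ * _
        exact div_le_div_of_nonneg_left ha hba (by linarith)
  have hfast : |a / (b - a) * (exp (-t * a) - exp (-t * b))| ≤ a / (b - a) * exp (-t * q / 2) := by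
    rw [abs_mul, abs_of_nonneg hρ, abs_of_nonneg (sub_nonneg.2 hEb)]
    exact mul_le_mul_of_nonneg_left (by linarith [exp_pos (-t * b)]) hρ
  calc _ = |(exp (-t * a) - exp (-t * q)) + a / (b - a) * (exp (-t * a) - exp (-t * b))| := by
        rw [hsplit]
    _ ≤ _ := abs_add_le _ _
    _ ≤ 2 * (a / (b - a)) * exp (-t * q / 2) + a / (b - a) * exp (-t * q / 2) :=
        add_le_add hslow hfast
    _ = _ := by ring

/-- For every `θ ∈ (0,1/2]` there is `C > 0` such that for `ε ∈ (0,1]`, `t ≥ 0`, `r ≥ 1`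
with `2εr ≤ ε^θ`, one has
`|ε^{−2}D_ε(r,t) + ∂_t D_ε(r,t) − e^{−tr²}| ≤ C ε^{2θ} e^{−tr²/2}`. -/
theorem dampedWave_symbol_cancellation_heat_convergence (θ : ℝ)
    (hθ : θ ∈ Set.Ioc (0:ℝ) (1/2)) :
    ∃ C : ℝ, 0 < C ∧ ∀ ε t r : ℝ, ε ∈ Set.Ioc (0:ℝ) 1 → 0 ≤ t → 1 ≤ r →
      2 * ε * r ≤ ε ^ θ →
      |D ε r t / ε ^ 2 + deriv (D ε r) t - Real.exp (-t * r ^ 2)|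
        ≤ C * ε ^ (2 * θ) * Real.exp (-t * r ^ 2 / 2) := by
  set κ := (1 / 2 : ℝ) ^ (2 * θ)
  have hκ : κ < 1 := rpow_lt_one (by norm_num) (by norm_num) (by linarith [hθ.1])
  refine ⟨3 / (2 * (1 - κ)), by have := sub_pos.2 hκ; positivity, ?_⟩
  rintro ε t r ⟨hε0, hε1⟩ ht hr hεr
  -- `2ε ≤ ε^θ ≤ 1` forces `ε ≤ 1/2`, which keeps `4ε²r²` uniformly below `1`.
  have hεhalf : ε ≤ 1 / 2 := by nlinarith [rpow_le_one hε0.le hε1 hθ.1.le]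
  have hsq : 4 * ε ^ 2 * r ^ 2 ≤ ε ^ (2 * θ) := by
    rw [mul_comm 2 θ, rpow_mul hε0.le, rpow_two]
    calc 4 * ε ^ 2 * r ^ 2 = (2 * ε * r) ^ 2 := by ring
      _ ≤ (ε ^ θ) ^ 2 := by gcongr
  have hεκ : ε ^ (2 * θ) ≤ κ := rpow_le_rpow hε0.le hεhalf (by linarith [hθ.1])
  obtain ⟨a, b, ha, hab, hsum, hprod, hratio⟩ := exists_decay_rates hε0.ne' (hsq.trans hεκ) hκ
  have hq : a * b = r ^ 2 * (a + b) := by rw [hsum, hprod]; ring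
  have hratio' : a / (b - a) ≤ ε ^ (2 * θ) / (2 * (1 - κ)) := hratio.trans (by gcongr)
  rw [D_div_sq_add_deriv hab.ne hsum hprod]
  calc _ ≤ 3 * (a / (b - a)) * exp (-t * r ^ 2 / 2) := abs_exp_combination_sub_exp_le ha hab hq ht
    _ ≤ 3 * (ε ^ (2 * θ) / (2 * (1 - κ))) * exp (-t * r ^ 2 / 2) := by gcongr
    _ = _ := by ring
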